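/- For every natural number N ≥ 4, N · C(N−1, ⌊(N−1)/2⌋) < C(2(N−1), N−1), and for N = 3 the two are equal: 3 · C(2, 1) = C(4, 2). -/
import Mathlib

lemma my_choose_le_two_pow (n k : ℕ) : Nat.choose n k ≤ 2 ^ n := by
  rcases le_or_gt k n with h | h
  · calc Nat.choose n k ≤ ∑ i ∈ Finset.range (n + 1), Nat.choose n i :=
          Finset.single_le_sum (fun i _ => Nat.zero_le _) (Finset.mem_range.mpr (by omega))
      _ = 2 ^ n := Nat.sum_range_choose n
  · simp [Nat.choose_eq_zero_of_lt h]

lemma my_pow_gt (n : ℕ) (hn : 7 ≤ n) : (n + 1) * (2 * n + 1) < 2 ^ n := by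
  induction n with
  | zero => omega
  | succ m ih =>
    rcases Nat.lt_or_ge m 7 with h | h
    · have : m = 6 := by omega
      subst this; norm_num
    · have := ih (by omega)
      have h2 : 2 ^ m ≥ 128 := by
        calc (128 : ℕ) = 2 ^ 7 := by norm_num
          _ ≤ 2 ^ m := Nat.pow_le_pow_right (by norm_num) h
      rw [pow_succ]
      nlinarith

lemma strict_main (N : ℕ) (hN : 4 ≤ N) :
    N * Nat.choose (N - 1) ((N - 1) / 2) < Nat.choose (2 * (N - 1)) (N - 1) := by
  obtain ⟨n, rfl⟩ : ∃ n, N = n + 1 := ⟨N - 1, by omega⟩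
  simp only [Nat.add_sub_cancel]
  have hn3 : 3 ≤ n := by omega
  rcases Nat.lt_or_ge n 7 with h | h
  · interval_cases n <;> decide
  · have key : (2 * n + 1) * ((n + 1) * Nat.choose n (n / 2)) <
        (2 * n + 1) * Nat.choose (2 * n) n := by
      calc (2 * n + 1) * ((n + 1) * Nat.choose n (n / 2))
          ≤ (2 * n + 1) * ((n + 1) * 2 ^ n) := by
            have := my_choose_le_two_pow n (n / 2)
            exact Nat.mul_le_mul_left _ (Nat.mul_le_mul_left _ this)
        _ < 2 ^ n * 2 ^ n := by
            have := my_pow_gt n h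
            calc (2 * n + 1) * ((n + 1) * 2 ^ n) = ((n + 1) * (2 * n + 1)) * 2 ^ n := by ring
              _ < 2 ^ n * 2 ^ n := by
                  exact Nat.mul_lt_mul_of_lt_of_le this le_rfl (by positivity)
        _ = 4 ^ n := by rw [← Nat.mul_pow]
        _ ≤ (2 * n + 1) * Nat.choose (2 * n) n :=
            Nat.four_pow_le_two_mul_add_one_mul_central_binom n
    exact Nat.lt_of_mul_lt_mul_left key

theorem ring_bkk_le_binomial :
    (∀ N : ℕ, 3 ≤ N →
      N * Nat.choose (N - 1) ((N - 1) / 2) ≤ Nat.choose (2 * (N - 1)) (N - 1)) ∧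
    (∀ N : ℕ, 4 ≤ N →
      N * Nat.choose (N - 1) ((N - 1) / 2) < Nat.choose (2 * (N - 1)) (N - 1)) ∧
    3 * Nat.choose 2 1 = Nat.choose 4 2 := by
  refine ⟨fun N hN => ?_, fun N hN => (strict_main N hN), by decide⟩
  rcases Nat.lt_or_ge N 4 with h | h
  · interval_cases N; decide
  · exact (strict_main N h).le
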